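/- Let L and γ be positive integers, B = {−γ+1, ..., 0}, C = {L+1, ..., L+γ}. Let W ⊆ [L] be symmetric with respect to x ↦ L+1−x, and let X¹, Y¹ ⊆ [L] satisfy X¹∩X̄¹ = ∅, Y¹∩Ȳ¹ = ∅ and X¹∪X̄¹ = Y¹∪Ȳ¹, where X̄¹ = {L+1−x : x∈X¹} and Ȳ¹ = {L+1−y : y∈Y¹}, with W disjoint from X¹∪X̄¹. Let q be a nonnegative integer. Then (Σ_{symmetric Z} Δ(Z∪X¹∪W∪C))² · (Σ_{all Z} Δ(Z∪Y¹∪W∪C)·Δ(B∪Z∪Ȳ¹∪W)) = (Σ_{symmetric Z} Δ(Z∪Y¹∪W∪C))² · (Σ_{all Z} Δ(Z∪X¹∪W∪C)·Δ(B∪Z∪X̄¹∪W)), where 'all Z' ranges over all subsets Z ⊆ [L]∖(X¹∪X̄¹∪W) with |Z| = q, and 'symmetric Z' over those that additionally satisfy Z = {L+1−z : z∈Z}. -/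
import Mathlib

def Dset (S : Finset ℤ) : ℤ :=
  ∏ x ∈ S, ∏ y ∈ S.filter (fun y => x < y), (y - x)

def Dpair (S T : Finset ℤ) : ℤ :=
  ∏ s ∈ S, ∏ t ∈ T, |t - s|

open Finset

lemma abs_factor {s t : ℤ} (h : t ≠ s) :
    |t - s| = (if s < t then t - s else 1) * (if t < s then s - t else 1) := by
  rcases lt_trichotomy s t with h1|h1|h1
  · rw [if_pos h1, if_neg (by omega), abs_of_pos (by omega)]; ring
  · exact absurd h1.symm h
  · rw [if_neg (by omega), if_pos h1, abs_of_neg (by omega)]; ring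

lemma E_mul_E (S T : Finset ℤ) (h : Disjoint S T) :
    (∏ x ∈ S, ∏ y ∈ T.filter (fun y => x < y), (y - x)) *
    (∏ x ∈ T, ∏ y ∈ S.filter (fun y => x < y), (y - x)) = Dpair S T := by
  have e2 : (∏ x ∈ T, ∏ y ∈ S.filter (fun y => x < y), (y - x))
      = ∏ s ∈ S, ∏ t ∈ T, (if t < s then s - t else 1) := by
    simp only [prod_filter]
    exact Finset.prod_comm
  have e1 : (∏ x ∈ S, ∏ y ∈ T.filter (fun y => x < y), (y - x))
      = ∏ s ∈ S, ∏ t ∈ T, (if s < t then t - s else 1) := by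
    simp only [prod_filter]
  rw [e1, e2, ← prod_mul_distrib]
  unfold Dpair
  refine prod_congr rfl (fun s hs => ?_)
  rw [← prod_mul_distrib]
  refine prod_congr rfl (fun t ht => ?_)
  have hts : t ≠ s := by rintro rfl; exact (Finset.disjoint_left.mp h hs) ht
  exact (abs_factor hts).symm

lemma Dset_union {S T : Finset ℤ} (h : Disjoint S T) :
    Dset (S ∪ T) = Dset S * Dset T * Dpair S T := by
  unfold Dset
  rw [prod_union h]
  have key : ∀ x : ℤ, ∏ y ∈ (S ∪ T).filter (fun y => x < y), (y - x)
      = (∏ y ∈ S.filter (fun y => x < y), (y - x)) *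
        ∏ y ∈ T.filter (fun y => x < y), (y - x) := by
    intro x
    rw [filter_union, prod_union (disjoint_filter_filter h)]
  simp only [key]
  rw [prod_mul_distrib, prod_mul_distrib]
  have h2 := E_mul_E S T h
  linear_combination (∏ x ∈ S, ∏ y ∈ S.filter (fun y => x < y), (y - x)) *
    (∏ x ∈ T, ∏ y ∈ T.filter (fun y => x < y), (y - x)) * h2

lemma Dpair_union_left {S S' : Finset ℤ} (h : Disjoint S S') (T : Finset ℤ) :
    Dpair (S ∪ S') T = Dpair S T * Dpair S' T := by
  unfold Dpair; rw [prod_union h]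

lemma Dpair_comm (S T : Finset ℤ) : Dpair S T = Dpair T S := by
  unfold Dpair
  rw [Finset.prod_comm]
  refine prod_congr rfl (fun t _ => prod_congr rfl (fun s _ => abs_sub_comm _ _))

lemma Dpair_ne_zero {S T : Finset ℤ} (h : Disjoint S T) : Dpair S T ≠ 0 := by
  unfold Dpair
  refine prod_ne_zero_iff.mpr (fun s hs => prod_ne_zero_iff.mpr (fun t ht => ?_))
  have : t ≠ s := fun e => (Finset.disjoint_left.mp h hs) (e ▸ ht)
  simpa [sub_eq_zero] using this

lemma Dpair_image (c : ℤ) (S T : Finset ℤ) :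
    Dpair (S.image (fun z => c - z)) (T.image (fun z => c - z)) = Dpair S T := by
  unfold Dpair
  have hinj : Function.Injective (fun z : ℤ => c - z) := fun a b e => by simpa using e
  rw [prod_image (fun a _ b _ e => hinj e)]
  refine prod_congr rfl (fun s _ => ?_)
  rw [prod_image (fun a _ b _ e => hinj e)]
  refine prod_congr rfl (fun t _ => ?_)
  show |c - t - (c - s)| = |t - s|
  rw [show c - t - (c - s) = -(t - s) by ring, abs_neg]

lemma Dset_flip (S : Finset ℤ) :
    (∏ x ∈ S, ∏ y ∈ S.filter (fun y => y < x), (x - y)) = Dset S := by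
  unfold Dset
  simp only [prod_filter]
  exact Finset.prod_comm

lemma Dset_image (c : ℤ) (S : Finset ℤ) :
    Dset (S.image (fun z => c - z)) = Dset S := by
  have hinj : Function.Injective (fun z : ℤ => c - z) := fun a b e => by simpa using e
  conv_lhs => unfold Dset
  rw [prod_image (fun a _ b _ e => hinj e)]
  rw [← Dset_flip S]
  refine prod_congr rfl (fun x hx => ?_)
  have hf : (S.image (fun z => c - z)).filter (fun y => c - x < y)
      = (S.filter (fun y => y < x)).image (fun z => c - z) := by
    ext a
    simp only [mem_filter, mem_image]
    constructor
    · rintro ⟨⟨z, hz, rfl⟩, hlt⟩; exact ⟨z, ⟨hz, by omega⟩, rfl⟩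
    · rintro ⟨z, ⟨hz, hlt⟩, rfl⟩; exact ⟨⟨z, hz, rfl⟩, by omega⟩
  rw [hf, prod_image (fun a _ b _ e => hinj e)]
  refine prod_congr rfl (fun y _ => by ring)

set_option maxHeartbeats 2000000 in
theorem square_root_phenomenon (L γ : ℕ) (hL : 0 < L) (hγ : 0 < γ)
    (B C : Finset ℤ)
    (hB : B = Finset.Icc (1 - (γ : ℤ)) 0)
    (hC : C = Finset.Icc ((L : ℤ) + 1) ((L : ℤ) + γ))
    (W X1 Y1 : Finset ℤ) (q : ℕ)
    (hWL : W ⊆ Finset.Icc (1 : ℤ) L)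
    (hW : W = W.image (fun w => (L : ℤ) + 1 - w))
    (X1b Y1b : Finset ℤ)
    (hX1b : X1b = X1.image (fun x => (L : ℤ) + 1 - x))
    (hY1b : Y1b = Y1.image (fun y => (L : ℤ) + 1 - y))
    (hX1L : X1 ⊆ Finset.Icc (1 : ℤ) L) (hY1L : Y1 ⊆ Finset.Icc (1 : ℤ) L)
    (hX : Disjoint X1 X1b) (hY : Disjoint Y1 Y1b)
    (hXY : X1 ∪ X1b = Y1 ∪ Y1b)
    (hWX : Disjoint W (X1 ∪ X1b)) :
    (∑ Z ∈ (Finset.powersetCard q (Finset.Icc (1 : ℤ) L \ (X1 ∪ X1b ∪ W))).filter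
        (fun Z => Z = Z.image (fun z => (L : ℤ) + 1 - z)),
        Dset (Z ∪ X1 ∪ W ∪ C)) ^ 2 *
      (∑ Z ∈ Finset.powersetCard q (Finset.Icc (1 : ℤ) L \ (X1 ∪ X1b ∪ W)),
        Dset (Z ∪ Y1 ∪ W ∪ C) * Dset (B ∪ Z ∪ Y1b ∪ W)) =
    (∑ Z ∈ (Finset.powersetCard q (Finset.Icc (1 : ℤ) L \ (X1 ∪ X1b ∪ W))).filter
        (fun Z => Z = Z.image (fun z => (L : ℤ) + 1 - z)),
        Dset (Z ∪ Y1 ∪ W ∪ C)) ^ 2 *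
      (∑ Z ∈ Finset.powersetCard q (Finset.Icc (1 : ℤ) L \ (X1 ∪ X1b ∪ W)),
        Dset (Z ∪ X1 ∪ W ∪ C) * Dset (B ∪ Z ∪ X1b ∪ W)) := by
  classical
  set r : ℤ → ℤ := fun z => (L : ℤ) + 1 - z with hr
  have hrinj : Function.Injective r := fun a b e => by simp only [hr] at e; omega
  have hrr : ∀ S : Finset ℤ, (S.image r).image r = S := by
    intro S
    rw [Finset.image_image]
    have hc : r ∘ r = id := by funext z; simp only [Function.comp, hr, id]; ring
    rw [hc, Finset.image_id]
  set K := X1 ∩ Y1 with hKdef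
  set D := X1 \ Y1 with hDdef
  set D' := Y1 \ X1 with hD'def
  have hrval : ∀ z : ℤ, r z = (L : ℤ) + 1 - z := fun z => rfl
  have hX1KD : X1 = K ∪ D := by
    rw [hKdef, hDdef, Finset.union_comm, Finset.sdiff_union_inter]
  have hY1KD' : Y1 = K ∪ D' := by
    rw [hKdef, hD'def, Finset.inter_comm, Finset.union_comm, Finset.sdiff_union_inter]
  have hKX1 : K ⊆ X1 := Finset.inter_subset_left
  have hDX1 : D ⊆ X1 := Finset.sdiff_subset
  have hD'Y1 : D' ⊆ Y1 := Finset.sdiff_subset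
  -- D' is the reflection of D
  have hD'img : D' = D.image r := by
    ext a
    simp only [hD'def, hDdef, Finset.mem_sdiff, Finset.mem_image]
    constructor
    · rintro ⟨haY, haX⟩
      have haU : a ∈ Y1 ∪ Y1b := Finset.mem_union_left _ haY
      rw [← hXY] at haU
      have haXb : a ∈ X1b := by
        rcases Finset.mem_union.mp haU with h | h
        · exact absurd h haX
        · exact h
      rw [hX1b] at haXb
      obtain ⟨x, hx, hxa⟩ := Finset.mem_image.mp haXb
      refine ⟨x, ⟨hx, ?_⟩, hxa⟩
      intro hxY
      have haYb : a ∈ Y1b := by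
        rw [hY1b]; exact Finset.mem_image.mpr ⟨x, hxY, hxa⟩
      exact (Finset.disjoint_left.mp hY haY) haYb
    · rintro ⟨x, ⟨hxX, hxY⟩, rfl⟩
      constructor
      · have hxU : x ∈ X1 ∪ X1b := Finset.mem_union_left _ hxX
        rw [hXY] at hxU
        rcases Finset.mem_union.mp hxU with h | h
        · exact absurd h hxY
        · rw [hY1b] at h
          obtain ⟨y, hy, hyx⟩ := Finset.mem_image.mp h
          have hxy : r x = y := by
            have e1 := hrval y
            have e2 := hrval x
            omega
          rwa [hxy]
      · intro hrx
        have hrxb : r x ∈ X1b := by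
          rw [hX1b]; exact Finset.mem_image.mpr ⟨x, hxX, rfl⟩
        exact (Finset.disjoint_left.mp hX hrx) hrxb
  have hDimg : D = D'.image r := by rw [hD'img, hrr]
  have hD'X1b : D' ⊆ X1b := by
    rw [hD'img, hX1b]
    exact Finset.image_subset_image hDX1
  have hrKX1b : K.image r ⊆ X1b := by
    rw [hX1b]; exact Finset.image_subset_image hKX1
  have hX1bL : X1b ⊆ Finset.Icc (1 : ℤ) L := by
    rw [hX1b]
    intro a ha
    obtain ⟨x, hx, rfl⟩ := Finset.mem_image.mp ha
    have hx' := Finset.mem_Icc.mp (hX1L hx)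
    have e := hrval x
    simp only [Finset.mem_Icc]; omega
  -- reflection of C is B
  have hrC : C.image r = B := by
    rw [hB, hC]
    ext a
    simp only [Finset.mem_image, Finset.mem_Icc]
    constructor
    · rintro ⟨x, hx, rfl⟩; have e := hrval x; omega
    · intro ha
      exact ⟨(L : ℤ) + 1 - a, by omega, by have e := hrval ((L : ℤ) + 1 - a); omega⟩
  -- disjointness with C and B
  have hdisjC : ∀ S : Finset ℤ, S ⊆ Finset.Icc (1 : ℤ) L → Disjoint S C := by
    intro S hS
    rw [Finset.disjoint_left]
    intro a ha hac
    have h1 := Finset.mem_Icc.mp (hS ha)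
    rw [hC] at hac
    have h2 := Finset.mem_Icc.mp hac
    omega
  have hdisjB : ∀ S : Finset ℤ, S ⊆ Finset.Icc (1 : ℤ) L → Disjoint S B := by
    intro S hS
    rw [Finset.disjoint_left]
    intro a ha hab
    have h1 := Finset.mem_Icc.mp (hS ha)
    rw [hB] at hab
    have h2 := Finset.mem_Icc.mp hab
    omega
  -- basic disjointness
  have hWX1' : Disjoint W X1 := hWX.mono_right Finset.subset_union_left
  have hWX1b : Disjoint W X1b := hWX.mono_right Finset.subset_union_right
  have hKD : Disjoint K D := by
    rw [Finset.disjoint_left]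
    intro a ha had
    exact (Finset.mem_sdiff.mp had).2 (Finset.mem_inter.mp ha).2
  have hKD' : Disjoint K D' := by
    rw [Finset.disjoint_left]
    intro a ha had
    exact (Finset.mem_sdiff.mp had).2 (Finset.mem_inter.mp ha).1
  have hX1D' : Disjoint X1 D' := by
    rw [Finset.disjoint_left]
    intro a ha had
    exact (Finset.mem_sdiff.mp had).2 ha
  -- the constants
  set M : Finset ℤ := K ∪ C with hMdef
  set M' : Finset ℤ := K.image r ∪ B with hM'def
  have hMimg : M.image r = M' := by
    rw [hMdef, hM'def, Finset.image_union, hrC]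
  have hKC : Disjoint K C := hdisjC K (hKX1.trans hX1L)
  have hDC : Disjoint D C := hdisjC D (hDX1.trans hX1L)
  have hD'C : Disjoint D' C := hdisjC D' (hD'Y1.trans hY1L)
  have hMD : Disjoint M D := Finset.disjoint_union_left.mpr ⟨hKD, hDC.symm⟩
  have hMD' : Disjoint M D' := Finset.disjoint_union_left.mpr ⟨hKD', hD'C.symm⟩
  set PX : ℤ := Dpair M D with hPXdef
  set PY : ℤ := Dpair M D' with hPYdef
  have hPY0 : PY ≠ 0 := Dpair_ne_zero hMD'
  -- M' disjointness
  have hrKB : Disjoint (K.image r) B := hdisjB _ (hrKX1b.trans hX1bL)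
  have hM'D : Disjoint M' D := by
    refine Finset.disjoint_union_left.mpr ⟨?_, (hdisjB D (hDX1.trans hX1L)).symm⟩
    exact (hX.symm.mono hrKX1b hDX1)
  have hM'D' : Disjoint M' D' := by
    refine Finset.disjoint_union_left.mpr ⟨?_, (hdisjB D' (hD'Y1.trans hY1L)).symm⟩
    rw [hD'img]
    exact (Finset.disjoint_image hrinj).mpr hKD
  -- key Dpair identities
  have hPm1 : Dpair M' D' = PX := by
    rw [← hMimg, hD'img, Dpair_image]
  have hPm2 : Dpair M' D = PY := by
    rw [← hMimg, hDimg, Dpair_image]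
  have hDsetD' : Dset D' = Dset D := by rw [hD'img, Dset_image]
  -- decomposition lemma
  have hdec : ∀ T M E : Finset ℤ, Disjoint T M → Disjoint T E → Disjoint M E →
      Dset (T ∪ M ∪ E) = Dset (T ∪ M) * Dset E * (Dpair T E * Dpair M E) := by
    intro T N E h1 h2 h3
    rw [Dset_union (Finset.disjoint_union_left.mpr ⟨h2, h3⟩), Dpair_union_left h1]
  -- per-Z facts
  have hperZ : ∀ Z : Finset ℤ, Z ⊆ Finset.Icc (1 : ℤ) L \ (X1 ∪ X1b ∪ W) →
      (Dset (Z ∪ X1 ∪ W ∪ C) = Dset (Z ∪ W ∪ M) * Dset D * (Dpair (Z ∪ W) D * PX) ∧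
       Dset (Z ∪ Y1 ∪ W ∪ C) = Dset (Z ∪ W ∪ M) * Dset D * (Dpair (Z ∪ W) D' * PY) ∧
       Dset (B ∪ Z ∪ X1b ∪ W) = Dset (Z ∪ W ∪ M') * Dset D * (Dpair (Z ∪ W) D' * PX) ∧
       Dset (B ∪ Z ∪ Y1b ∪ W) = Dset (Z ∪ W ∪ M') * Dset D * (Dpair (Z ∪ W) D * PY)) := by
    intro Z hZsub
    have hZL : Z ⊆ Finset.Icc (1 : ℤ) L := hZsub.trans Finset.sdiff_subset
    have hZn : ∀ a ∈ Z, a ∉ X1 ∪ X1b ∪ W := by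
      intro a ha
      exact (Finset.mem_sdiff.mp (hZsub ha)).2
    have hZX1 : Disjoint Z X1 := by
      rw [Finset.disjoint_left]
      intro a ha h
      exact hZn a ha (Finset.mem_union_left _ (Finset.mem_union_left _ h))
    have hZX1b : Disjoint Z X1b := by
      rw [Finset.disjoint_left]
      intro a ha h
      exact hZn a ha (Finset.mem_union_left _ (Finset.mem_union_right _ h))
    have hZW : Disjoint Z W := by
      rw [Finset.disjoint_left]
      intro a ha h
      exact hZn a ha (Finset.mem_union_right _ h)
    have hT : Disjoint (Z ∪ W) D :=
      Finset.disjoint_union_left.mpr ⟨hZX1.mono_right hDX1, hWX1'.mono_right hDX1⟩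
    have hT' : Disjoint (Z ∪ W) D' :=
      Finset.disjoint_union_left.mpr ⟨hZX1b.mono_right hD'X1b, hWX1b.mono_right hD'X1b⟩
    have hTK : Disjoint (Z ∪ W) K :=
      Finset.disjoint_union_left.mpr ⟨hZX1.mono_right hKX1, hWX1'.mono_right hKX1⟩
    have hTM : Disjoint (Z ∪ W) M := by
      refine Finset.disjoint_union_right.mpr ⟨hTK, ?_⟩
      exact hdisjC _ (Finset.union_subset hZL hWL)
    have hTrK : Disjoint (Z ∪ W) (K.image r) :=
      Finset.disjoint_union_left.mpr ⟨hZX1b.mono_right hrKX1b, hWX1b.mono_right hrKX1b⟩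
    have hTM' : Disjoint (Z ∪ W) M' := by
      refine Finset.disjoint_union_right.mpr ⟨hTrK, ?_⟩
      exact hdisjB _ (Finset.union_subset hZL hWL)
    refine ⟨?_, ?_, ?_, ?_⟩
    · have hs : Z ∪ X1 ∪ W ∪ C = Z ∪ W ∪ M ∪ D := by
        rw [hX1KD, hMdef]
        ext a
        simp only [Finset.mem_union]
        tauto
      rw [hs, hdec _ _ _ hTM hT hMD, hPXdef]
    · have hs : Z ∪ Y1 ∪ W ∪ C = Z ∪ W ∪ M ∪ D' := by
        rw [hY1KD', hMdef]
        ext a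
        simp only [Finset.mem_union]
        tauto
      rw [hs, hdec _ _ _ hTM hT' hMD', hPYdef, hDsetD']
    · have hX1bKD : X1b = K.image r ∪ D.image r := by
        rw [hX1b, ← Finset.image_union, ← hX1KD]
      have hs : B ∪ Z ∪ X1b ∪ W = Z ∪ W ∪ M' ∪ D' := by
        rw [hX1bKD, hM'def, ← hD'img]
        ext a
        simp only [Finset.mem_union]
        tauto
      rw [hs, hdec _ _ _ hTM' hT' hM'D', hPm1, hDsetD']
    · have hY1bKD : Y1b = K.image r ∪ D := by
        rw [hY1b, hY1KD', Finset.image_union, ← hDimg]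
      have hs : B ∪ Z ∪ Y1b ∪ W = Z ∪ W ∪ M' ∪ D := by
        rw [hY1bKD, hM'def]
        ext a
        simp only [Finset.mem_union]
        tauto
      rw [hs, hdec _ _ _ hTM' hT hM'D, hPm2]
  -- symmetric-Z identity
  have hsympt : ∀ Z ∈ (Finset.powersetCard q (Finset.Icc (1 : ℤ) L \ (X1 ∪ X1b ∪ W))).filter
      (fun Z => Z = Z.image (fun z => (L : ℤ) + 1 - z)),
      PY * Dset (Z ∪ X1 ∪ W ∪ C) = PX * Dset (Z ∪ Y1 ∪ W ∪ C) := by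
    intro Z hZ
    obtain ⟨hZmem, hZsym⟩ := Finset.mem_filter.mp hZ
    obtain ⟨hZsub, -⟩ := Finset.mem_powersetCard.mp hZmem
    obtain ⟨e1, e2, -, -⟩ := hperZ Z hZsub
    have hTsym : (Z ∪ W).image r = Z ∪ W := by
      rw [Finset.image_union, ← hZsym, ← hW]
    have hcross : Dpair (Z ∪ W) D' = Dpair (Z ∪ W) D := by
      rw [hD'img]
      conv_lhs => rw [← hTsym]
      rw [Dpair_image]
    rw [e1, e2, hcross]
    ring
  -- full identity
  have hfullpt : ∀ Z ∈ Finset.powersetCard q (Finset.Icc (1 : ℤ) L \ (X1 ∪ X1b ∪ W)),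
      PY ^ 2 * (Dset (Z ∪ X1 ∪ W ∪ C) * Dset (B ∪ Z ∪ X1b ∪ W)) =
      PX ^ 2 * (Dset (Z ∪ Y1 ∪ W ∪ C) * Dset (B ∪ Z ∪ Y1b ∪ W)) := by
    intro Z hZ
    obtain ⟨hZsub, -⟩ := Finset.mem_powersetCard.mp hZ
    obtain ⟨e1, e2, e3, e4⟩ := hperZ Z hZsub
    rw [e1, e2, e3, e4]
    ring
  -- sums
  have h1 : PY * (∑ Z ∈ (Finset.powersetCard q (Finset.Icc (1 : ℤ) L \ (X1 ∪ X1b ∪ W))).filter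
        (fun Z => Z = Z.image (fun z => (L : ℤ) + 1 - z)), Dset (Z ∪ X1 ∪ W ∪ C))
      = PX * (∑ Z ∈ (Finset.powersetCard q (Finset.Icc (1 : ℤ) L \ (X1 ∪ X1b ∪ W))).filter
        (fun Z => Z = Z.image (fun z => (L : ℤ) + 1 - z)), Dset (Z ∪ Y1 ∪ W ∪ C)) := by
    rw [Finset.mul_sum, Finset.mul_sum]
    exact Finset.sum_congr rfl hsympt
  have h2 : PY ^ 2 * (∑ Z ∈ Finset.powersetCard q (Finset.Icc (1 : ℤ) L \ (X1 ∪ X1b ∪ W)),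
        Dset (Z ∪ X1 ∪ W ∪ C) * Dset (B ∪ Z ∪ X1b ∪ W))
      = PX ^ 2 * (∑ Z ∈ Finset.powersetCard q (Finset.Icc (1 : ℤ) L \ (X1 ∪ X1b ∪ W)),
        Dset (Z ∪ Y1 ∪ W ∪ C) * Dset (B ∪ Z ∪ Y1b ∪ W)) := by
    rw [Finset.mul_sum, Finset.mul_sum]
    exact Finset.sum_congr rfl hfullpt
  set SX : ℤ := ∑ Z ∈ (Finset.powersetCard q (Finset.Icc (1 : ℤ) L \ (X1 ∪ X1b ∪ W))).filter
      (fun Z => Z = Z.image (fun z => (L : ℤ) + 1 - z)), Dset (Z ∪ X1 ∪ W ∪ C)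
  set SY : ℤ := ∑ Z ∈ (Finset.powersetCard q (Finset.Icc (1 : ℤ) L \ (X1 ∪ X1b ∪ W))).filter
      (fun Z => Z = Z.image (fun z => (L : ℤ) + 1 - z)), Dset (Z ∪ Y1 ∪ W ∪ C)
  set FX : ℤ := ∑ Z ∈ Finset.powersetCard q (Finset.Icc (1 : ℤ) L \ (X1 ∪ X1b ∪ W)),
      Dset (Z ∪ X1 ∪ W ∪ C) * Dset (B ∪ Z ∪ X1b ∪ W)
  set FY : ℤ := ∑ Z ∈ Finset.powersetCard q (Finset.Icc (1 : ℤ) L \ (X1 ∪ X1b ∪ W)),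
      Dset (Z ∪ Y1 ∪ W ∪ C) * Dset (B ∪ Z ∪ Y1b ∪ W)
  have hc : PY ^ 2 * (SX ^ 2 * FY) = PY ^ 2 * (SY ^ 2 * FX) := by
    linear_combination FY * (PY * SX + PX * SY) * h1 - SY ^ 2 * h2
  exact mul_left_cancel₀ (pow_ne_zero 2 hPY0) hc
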